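/- For polynomials p, q in ℂ[z_0,…,z_{m−1}] and any index i, the Bessel–Fischer pairing satisfies the adjointness relation ⟨z_i p, q⟩_B = ⟨p, B̃(z_i) q⟩_B, where B̃(z_i) is the modified Bessel operator. -/

import Mathlib

/-!
The modified Bessel operators `B̃(z_k)` commute pairwise: writing
`B̃(z_k) = (m - 2 + 2E) ∂^k - β_{kk} z_k Δ`, this follows from the commutation relations of
`∂`, `z`, the Euler operator `E` and the Laplacian `Δ`. Hence substituting them into a polynomial
is the algebra homomorphism `aeval` into the commutative algebra they generate, so
`(z_i p)(B̃) = p(B̃) B̃(z_i)`. All scalars occurring in `B̃(z_i)` are integers, so `B̃(z_i)`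
commutes with every coefficient map, in particular with `q ↦ q̄`. Therefore
`⟨z_i p, q⟩_B = (p(B̃) B̃(z_i) q̄)(0) = ⟨p, B̃(z_i) q⟩_B`.
-/

open MvPolynomial

noncomputable section

/-- Complex polynomials in the variables `z_0, …, z_{m−1}`. -/
abbrev Pm (m : ℕ) := MvPolynomial (Fin m) ℂ

/-- The diagonal entries of the bilinear form `β`: `β_{00} = −1`, `β_{kk} = 1` for `k ≥ 1`. -/
def sgn (m : ℕ) (i : Fin m) : ℂ := if (i : ℕ) = 0 then -1 else 1

/-- The plain partial derivative `∂^i` as a linear operator. -/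
def DOp (m : ℕ) (i : Fin m) : Module.End ℂ (Pm m) := (pderiv i).toLinearMap

/-- The lowered partial derivative `∂_i = ∑_k β_{ik} ∂^k`. -/
def dlow (m : ℕ) (i : Fin m) : Module.End ℂ (Pm m) := sgn m i • DOp m i

/-- Multiplication by the variable `z_i`. -/
def mulX (m : ℕ) (i : Fin m) : Module.End ℂ (Pm m) := LinearMap.mulLeft ℂ (X i)

/-- The Euler operator `E = ∑_{i,j} β^{ij} z_i ∂_j`. -/
def EOp (m : ℕ) : Module.End ℂ (Pm m) := ∑ i, sgn m i • (mulX m i * dlow m i)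

/-- The Laplacian `Δ = ∑_{i,j} β^{ij} ∂_i ∂_j`. -/
def LapOp (m : ℕ) : Module.End ℂ (Pm m) := ∑ i, sgn m i • (dlow m i * dlow m i)

/-- The Bessel operator `B(z_i) = (m − 2 + 2E)∂_i − z_i Δ` (parameter `λ = 2 − m`). -/
def BOp (m : ℕ) (i : Fin m) : Module.End ℂ (Pm m) :=
  (((m : ℂ) - 2) • (1 : Module.End ℂ (Pm m)) + (2 : ℂ) • EOp m) * dlow m i
    - mulX m i * LapOp m

/-- The modified Bessel operator: `B̃(z_0) = −B(z_0)`, `B̃(z_k) = B(z_k)` for `k ≥ 1`. -/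
def BtOp (m : ℕ) (i : Fin m) : Module.End ℂ (Pm m) := sgn m i • BOp m i

/-- The Bessel–Fischer product `⟨p,q⟩_B := (p(B̃) q̄)(0)`: substitute the modified
Bessel operators for the variables of `p`, apply to the coefficient-conjugate of `q`,
and evaluate at `0`. -/
def BF (m : ℕ) (p q : Pm m) : ℂ :=
  eval (0 : Fin m → ℂ)
    (((∑ α ∈ p.support, p.coeff α • (List.ofFn fun i : Fin m => (BtOp m i) ^ (α i)).prod) :
        Module.End ℂ (Pm m)) (map (starRingEnd ℂ) q))

/-- The angular momentum operator `L_{ij} = z_i ∂_j − z_j ∂_i`. -/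
def LOp (m : ℕ) (i j : Fin m) : Module.End ℂ (Pm m) :=
  mulX m i * dlow m j - mulX m j * dlow m i

/-- The squared radial coordinate `R² = ∑_{i,j} β^{ij} z_i z_j`. -/
def R2 (m : ℕ) : Pm m := ∑ i, sgn m i • (X i * X i)

section WeylRelations

variable {m : ℕ}

lemma DOp_commute (i j : Fin m) : Commute (DOp m i) (DOp m j) := by
  classical
  have h : ⁅pderiv i, pderiv j⁆ = (0 : Derivation ℂ (Pm m) (Pm m)) :=
    derivation_ext fun k => by
      rw [Derivation.commutator_apply, pderiv_X, pderiv_X]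
      simp only [Pi.single_apply]; split_ifs <;> simp
  have := congrArg (fun D : Derivation ℂ (Pm m) (Pm m) => (D : Module.End ℂ (Pm m))) h
  simp only [Derivation.commutator_coe_linear_map, Ring.lie_def] at this
  exact sub_eq_zero.mp this

lemma mulX_commute (i j : Fin m) : Commute (mulX m i) (mulX m j) :=
  LinearMap.ext fun p => by simp only [mulX, Module.End.mul_apply, LinearMap.mulLeft_apply]; ring

lemma DOp_mul_mulX (i j : Fin m) :
    DOp m i * mulX m j = mulX m j * DOp m i + if i = j then 1 else 0 := by
  refine LinearMap.ext fun p => ?_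
  rcases eq_or_ne i j with rfl | h
  · simp [DOp, mulX, add_comm]
  · simp [DOp, mulX, h, pderiv_X_of_ne (Ne.symm h)]

lemma sgn_mul_self (i : Fin m) : sgn m i * sgn m i = 1 := by
  unfold sgn; split_ifs <;> norm_num

lemma EOp_eq_sum : EOp m = ∑ k, mulX m k * DOp m k := by
  refine Finset.sum_congr rfl fun k _ => ?_
  rw [dlow, mul_smul_comm, smul_smul, sgn_mul_self, one_smul]

lemma LapOp_eq_sum : LapOp m = ∑ k, sgn m k • (DOp m k * DOp m k) := by
  refine Finset.sum_congr rfl fun k _ => ?_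
  rw [dlow, smul_mul_smul_comm, smul_smul, sgn_mul_self, mul_one]

lemma DOp_mul_EOp (i : Fin m) : DOp m i * EOp m = EOp m * DOp m i + DOp m i := by
  have h (k : Fin m) : DOp m i * (mulX m k * DOp m k)
      = mulX m k * DOp m k * DOp m i + if i = k then DOp m k else 0 := by
    rw [← mul_assoc, DOp_mul_mulX, add_mul, ite_mul, one_mul, zero_mul, mul_assoc,
      (DOp_commute i k).eq, ← mul_assoc]
  simp only [EOp_eq_sum, Finset.mul_sum, Finset.sum_mul, h, Finset.sum_add_distrib,
    Finset.sum_ite_eq, Finset.mem_univ, if_true]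

lemma EOp_mul_mulX (i : Fin m) : EOp m * mulX m i = mulX m i * EOp m + mulX m i := by
  have h (k : Fin m) : mulX m k * DOp m k * mulX m i
      = mulX m i * (mulX m k * DOp m k) + if k = i then mulX m k else 0 := by
    rw [mul_assoc, DOp_mul_mulX, mul_add, mul_ite, mul_one, mul_zero, ← mul_assoc,
      (mulX_commute k i).eq, mul_assoc]
  simp only [EOp_eq_sum, Finset.mul_sum, Finset.sum_mul, h, Finset.sum_add_distrib,
    Finset.sum_ite_eq', Finset.mem_univ, if_true]

lemma LapOp_commute_DOp (i : Fin m) : Commute (LapOp m) (DOp m i) := by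
  rw [LapOp_eq_sum]
  exact Commute.sum_left _ _ _ fun k _ =>
    ((DOp_commute k i).mul_left (DOp_commute k i)).smul_left _

lemma LapOp_mul_mulX (i : Fin m) :
    LapOp m * mulX m i = mulX m i * LapOp m + (2 * sgn m i) • DOp m i := by
  have h (k : Fin m) : sgn m k • (DOp m k * DOp m k) * mulX m i
      = mulX m i * (sgn m k • (DOp m k * DOp m k))
        + if k = i then (2 * sgn m k) • DOp m k else 0 := by
    rcases eq_or_ne k i with rfl | h
    · simp only [smul_mul_assoc, mul_smul_comm, mul_assoc, DOp_mul_mulX, if_true, mul_add,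
        mul_one, ← mul_assoc (DOp m k) (mulX m k), add_mul, one_mul]
      module
    · simp only [smul_mul_assoc, mul_smul_comm, mul_assoc, DOp_mul_mulX, if_neg h, add_zero,
        ← mul_assoc (DOp m k) (mulX m i)]
  simp only [LapOp_eq_sum, Finset.mul_sum, Finset.sum_mul, h, Finset.sum_add_distrib,
    Finset.sum_ite_eq', Finset.mem_univ, if_true]

lemma LapOp_mul_EOp : LapOp m * EOp m = EOp m * LapOp m + (2 : ℂ) • LapOp m := by
  have h (k : Fin m) : LapOp m * (mulX m k * DOp m k)
      = mulX m k * DOp m k * LapOp m + (2 : ℂ) • (sgn m k • (DOp m k * DOp m k)) := by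
    rw [← mul_assoc, LapOp_mul_mulX, add_mul, mul_assoc, (LapOp_commute_DOp k).eq,
      ← mul_assoc, smul_mul_assoc, smul_smul]
  conv_lhs => rw [EOp_eq_sum, Finset.mul_sum]
  rw [Finset.sum_congr rfl fun k _ => h k, Finset.sum_add_distrib, ← Finset.smul_sum,
    ← LapOp_eq_sum, ← Finset.sum_mul, ← EOp_eq_sum]

end WeylRelations

section BesselOperators

variable {m : ℕ}

def eulerShift (m : ℕ) : Module.End ℂ (Pm m) := ((m : ℂ) - 2) • 1 + (2 : ℂ) • EOp m

lemma DOp_mul_eulerShift (i : Fin m) :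
    DOp m i * eulerShift m = eulerShift m * DOp m i + (2 : ℂ) • DOp m i := by
  simp only [eulerShift, mul_add, add_mul, mul_smul_comm, smul_mul_assoc, mul_one, one_mul,
    DOp_mul_EOp]
  module

lemma mulX_mul_eulerShift (i : Fin m) :
    mulX m i * eulerShift m = eulerShift m * mulX m i - (2 : ℂ) • mulX m i := by
  simp only [eulerShift, mul_add, add_mul, mul_smul_comm, smul_mul_assoc, mul_one, one_mul,
    EOp_mul_mulX]
  module

lemma LapOp_mul_eulerShift :
    LapOp m * eulerShift m = eulerShift m * LapOp m + (4 : ℂ) • LapOp m := by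
  simp only [eulerShift, mul_add, add_mul, mul_smul_comm, smul_mul_assoc, mul_one, one_mul,
    LapOp_mul_EOp]
  module

lemma BtOp_eq (i : Fin m) :
    BtOp m i = eulerShift m * DOp m i - sgn m i • (mulX m i * LapOp m) := by
  rw [BtOp, BOp, dlow, mul_smul_comm, smul_sub, smul_smul, sgn_mul_self, one_smul, eulerShift]

lemma BtOp_mul_BtOp_of_ne {a b : Fin m} (hab : a ≠ b) :
    BtOp m a * BtOp m b =
      eulerShift m * eulerShift m * (DOp m a * DOp m b)
        + (2 : ℂ) • (eulerShift m * (DOp m a * DOp m b))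
        - sgn m b • (eulerShift m * mulX m b * (DOp m a * LapOp m))
        - sgn m a • (eulerShift m * mulX m a * (DOp m b * LapOp m))
        + (sgn m a * sgn m b) • (mulX m a * mulX m b * (LapOp m * LapOp m)) := by
  have hCC : eulerShift m * DOp m a * (eulerShift m * DOp m b)
      = eulerShift m * eulerShift m * (DOp m a * DOp m b)
        + (2 : ℂ) • (eulerShift m * (DOp m a * DOp m b)) := by
    rw [mul_assoc, ← mul_assoc (DOp m a), DOp_mul_eulerShift]
    simp only [add_mul, mul_add, smul_mul_assoc, mul_smul_comm, mul_assoc]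
  have hCL : eulerShift m * DOp m a * (mulX m b * LapOp m)
      = eulerShift m * mulX m b * (DOp m a * LapOp m) := by
    rw [mul_assoc, ← mul_assoc (DOp m a), DOp_mul_mulX, if_neg hab, add_zero]
    simp only [mul_assoc]
  have hLC : mulX m a * LapOp m * (eulerShift m * DOp m b)
      = eulerShift m * mulX m a * (DOp m b * LapOp m)
        + (2 : ℂ) • (mulX m a * (DOp m b * LapOp m)) := by
    calc mulX m a * LapOp m * (eulerShift m * DOp m b)
        = mulX m a * (LapOp m * eulerShift m) * DOp m b := by simp only [mul_assoc]
      _ = (mulX m a * eulerShift m) * (LapOp m * DOp m b)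
            + (4 : ℂ) • (mulX m a * (LapOp m * DOp m b)) := by
          rw [LapOp_mul_eulerShift]
          simp only [add_mul, mul_add, smul_mul_assoc, mul_smul_comm, mul_assoc]
      _ = _ := by
          rw [mulX_mul_eulerShift, (LapOp_commute_DOp b).eq]
          simp only [sub_mul, smul_mul_assoc, mul_assoc]
          module
  have hLL : mulX m a * LapOp m * (mulX m b * LapOp m)
      = mulX m a * mulX m b * (LapOp m * LapOp m)
        + (2 * sgn m b) • (mulX m a * (DOp m b * LapOp m)) := by
    rw [mul_assoc, ← mul_assoc (LapOp m), LapOp_mul_mulX]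
    simp only [add_mul, mul_add, smul_mul_assoc, mul_smul_comm, mul_assoc]
  rw [BtOp_eq, BtOp_eq, sub_mul, mul_sub, mul_sub, smul_mul_assoc, mul_smul_comm, hCC, hCL,
    smul_mul_assoc, mul_smul_comm, smul_smul, hLC, hLL]
  have hsq : sgn m a * sgn m b * (2 * sgn m b) = 2 * sgn m a := by
    linear_combination (2 * sgn m a) * sgn_mul_self b
  simp only [smul_add, smul_smul, hsq]
  module

lemma BtOp_commute (a b : Fin m) : Commute (BtOp m a) (BtOp m b) := by
  rcases eq_or_ne a b with rfl | hab
  · exact Commute.refl _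
  rw [Commute, SemiconjBy, BtOp_mul_BtOp_of_ne hab, BtOp_mul_BtOp_of_ne hab.symm,
    (DOp_commute b a).eq, (mulX_commute b a).eq, mul_comm (sgn m b)]
  abel

end BesselOperators

section CoefficientMap

variable {m : ℕ} (f : ℂ →+* ℂ)

def CommutesWithMap (T : Module.End ℂ (Pm m)) : Prop := ∀ q, map f (T q) = T (map f q)

namespace CommutesWithMap

variable {f} {S T : Module.End ℂ (Pm m)}

lemma one : CommutesWithMap f (1 : Module.End ℂ (Pm m)) := fun _ => rfl

lemma add (hS : CommutesWithMap f S) (hT : CommutesWithMap f T) :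
    CommutesWithMap f (S + T) := fun q => by
  simp only [LinearMap.add_apply, map_add, hS q, hT q]

lemma sub (hS : CommutesWithMap f S) (hT : CommutesWithMap f T) :
    CommutesWithMap f (S - T) := fun q => by
  simp only [LinearMap.sub_apply, map_sub, hS q, hT q]

lemma mul (hS : CommutesWithMap f S) (hT : CommutesWithMap f T) :
    CommutesWithMap f (S * T) := fun q => by
  simp only [Module.End.mul_apply, hS _, hT q]

lemma smul {c : ℂ} (hc : f c = c) (hT : CommutesWithMap f T) :
    CommutesWithMap f (c • T) := fun q => by
  simp only [LinearMap.smul_apply, smul_eq_C_mul, map_mul, map_C, hc, hT q]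

lemma sum {ι : Type*} (s : Finset ι) {T : ι → Module.End ℂ (Pm m)}
    (hT : ∀ k ∈ s, CommutesWithMap f (T k)) :
    CommutesWithMap f (∑ k ∈ s, T k) := fun q => by
  simp only [LinearMap.sum_apply, map_sum]
  exact Finset.sum_congr rfl fun k hk => hT k hk q

end CommutesWithMap

lemma map_sgn (i : Fin m) : f (sgn m i) = sgn m i := by
  unfold sgn; split_ifs <;> simp

lemma commutesWithMap_DOp (i : Fin m) : CommutesWithMap f (DOp m i) := fun _ => pderiv_map.symm

lemma commutesWithMap_mulX (i : Fin m) : CommutesWithMap f (mulX m i) := fun q => by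
  simp only [mulX, LinearMap.mulLeft_apply, map_mul, map_X]

lemma commutesWithMap_BtOp (i : Fin m) : CommutesWithMap f (BtOp m i) := by
  have hE : CommutesWithMap f (EOp m) := by
    rw [EOp_eq_sum]
    exact CommutesWithMap.sum _ fun k _ => (commutesWithMap_mulX f k).mul (commutesWithMap_DOp f k)
  have hLap : CommutesWithMap f (LapOp m) := by
    rw [LapOp_eq_sum]
    exact CommutesWithMap.sum _ fun k _ =>
      ((commutesWithMap_DOp f k).mul (commutesWithMap_DOp f k)).smul (map_sgn f k)
  have hC : CommutesWithMap f (eulerShift m) :=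
    (CommutesWithMap.one.smul (by simp [map_ofNat])).add (hE.smul (map_ofNat f 2))
  rw [BtOp_eq]
  exact (hC.mul (commutesWithMap_DOp f i)).sub
    (((commutesWithMap_mulX f i).mul hLap).smul (map_sgn f i))

end CoefficientMap

def orderedEval {R A : Type*} [CommSemiring R] [Semiring A] [Algebra R A] {n : ℕ}
    (b : Fin n → A) (p : MvPolynomial (Fin n) R) : A :=
  ∑ α ∈ p.support, p.coeff α • (List.ofFn fun k => b k ^ α k).prod

open scoped IsMulCommutative in
lemma orderedEval_X_mul {R A : Type*} [CommSemiring R] [Semiring A] [Algebra R A] {n : ℕ}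
    (b : Fin n → A) (hb : ∀ k l, Commute (b k) (b l)) (i : Fin n) (p : MvPolynomial (Fin n) R) :
    orderedEval b (X i * p) = orderedEval b p * b i := by
  let S := Algebra.adjoin R (Set.range b)
  have : IsMulCommutative S := Algebra.isMulCommutative_adjoin R <| by
    rintro _ ⟨k, rfl⟩ _ ⟨l, rfl⟩; exact hb k l
  let b' : Fin n → S := fun k => ⟨b k, Algebra.subset_adjoin ⟨k, rfl⟩⟩
  -- in the commutative algebra `S`, the ordered products are the monomials of `aeval`
  have h_aeval (q : MvPolynomial (Fin n) R) : orderedEval b q = S.val (aeval b' q) := by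
    rw [aeval_def, eval₂_eq', orderedEval, map_sum]
    refine Finset.sum_congr rfl fun α _ => ?_
    rw [← Algebra.smul_def, map_smul, ← Fin.prod_ofFn, map_list_prod, List.map_ofFn]
    rfl
  rw [h_aeval, h_aeval, map_mul, aeval_X, mul_comm, map_mul]
  rfl

lemma BF_eq_orderedEval (m : ℕ) (p q : Pm m) :
    BF m p q = eval 0 (orderedEval (BtOp m) p (map (starRingEnd ℂ) q)) := rfl

/-- Adjointness: `⟨z_i p, q⟩_B = ⟨p, B̃(z_i) q⟩_B`. -/
theorem stmt9 (m : ℕ) (i : Fin m) (p q : Pm m) :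
    BF m (X i * p) q = BF m p (BtOp m i q) := by
  rw [BF_eq_orderedEval, BF_eq_orderedEval, orderedEval_X_mul (BtOp m) BtOp_commute,
    Module.End.mul_apply, commutesWithMap_BtOp]
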